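/- arXiv:1306.6539 — 2 statements merged into one kernel-verified Lean document; each statement's English description precedes it below -/
import Mathlib

section
/- Let X be a complex Banach space, B : X → X a continuous ℂ-linear operator invertible with continuous inverse B⁻¹, and f : ℝ → X continuous. Then u(t) = ∫_{0}^{t} (i/2)·B⁻¹((exp(−i·(t−s)·B) − exp(i·(t−s)·B))(f(s))) ds, for t ≥ 0, is twice differentiable and satisfies the inhomogeneous wave equation u''(t) + B(B(u(t))) = f(t) for all t ≥ 0, with u(0) = 0 and u'(0) = 0. -/
/-!
Writing `e^{∓i(t-s)B} = e^{∓itB} e^{±isB}`, the solution splits as `u = (i/2) B⁻¹ (w₋ - w₊)`,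
where `w_∓ t = ∫₀ᵗ e^{∓i(t-s)B} f s ds` is the Duhamel integral solving `w' = ∓iBw + f`,
`w 0 = 0`. This is the factorisation `∂² + B² = (∂ - iB)(∂ + iB)`: differentiating once gives
`u' = (w₋ + w₊)/2`, and once more `u'' = f - B²u`.
-/

open NormedSpace intervalIntegral
open Complex (I)

theorem HasDerivAt.complex_clm_apply {X Y : Type*} [NormedAddCommGroup X] [NormedSpace ℂ X]
    [NormedAddCommGroup Y] [NormedSpace ℂ Y] {c : ℝ → X →L[ℂ] Y} {c' : X →L[ℂ] Y}
    {g : ℝ → X} {g' : X} {t : ℝ} (hc : HasDerivAt c c' t) (hg : HasDerivAt g g' t) :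
    HasDerivAt (fun s => c s (g s)) (c' (g t) + c t g') t :=
  ((ContinuousLinearMap.restrictScalarsL ℂ X Y ℝ ℝ).hasFDerivAt.comp_hasDerivAt t hc).clm_apply hg

section Duhamel

variable {X : Type*} [NormedAddCommGroup X] [NormedSpace ℂ X] [CompleteSpace X]
  (A : X →L[ℂ] X) {f : ℝ → X}

theorem exp_add_smul (s t : ℝ) : exp ((s + t) • A) = exp (s • A) * exp (t • A) := by
  let +nondep : NormedAlgebra ℚ (X →L[ℂ] X) := .restrictScalars ℚ ℂ _
  rw [add_smul]
  exact exp_add_of_commute (((Commute.refl A).smul_left s).smul_right t)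

theorem exp_smul_mul_exp_neg_smul (t : ℝ) : exp (t • A) * exp (-t • A) = 1 := by
  rw [← exp_add_smul, add_neg_cancel, zero_smul, exp_zero]

theorem hasDerivAt_exp_smul (t : ℝ) :
    HasDerivAt (fun s : ℝ => exp (s • A)) (A * exp (t • A)) t :=
  hasDerivAt_exp_smul_const' A t

theorem continuous_exp_smul : Continuous fun t : ℝ => exp (t • A) :=
  continuous_iff_continuousAt.2 fun t => (hasDerivAt_exp_smul A t).continuousAt

theorem continuous_exp_neg_smul_apply (hf : Continuous f) :
    Continuous fun s : ℝ => exp (-s • A) (f s) :=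
  ((continuous_exp_smul A).comp continuous_neg).clm_apply hf

noncomputable def duhamel (f : ℝ → X) (t : ℝ) : X :=
  ∫ s in (0 : ℝ)..t, exp ((t - s) • A) (f s)

omit [CompleteSpace X] in
theorem duhamel_zero : duhamel A f 0 = 0 :=
  integral_same

theorem duhamel_eq_exp_smul_apply_integral (hf : Continuous f) (t : ℝ) :
    duhamel A f t = exp (t • A) (∫ s in (0 : ℝ)..t, exp (-s • A) (f s)) := by
  rw [← (exp (t • A)).intervalIntegral_comp_comm
    ((continuous_exp_neg_smul_apply A hf).intervalIntegrable _ _)]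
  simp_rw [duhamel, sub_eq_add_neg, exp_add_smul, mul_apply_eq_comp]

theorem hasDerivAt_duhamel (hf : Continuous f) (t : ℝ) :
    HasDerivAt (duhamel A f) (A (duhamel A f t) + f t) t := by
  have hint := continuous_exp_neg_smul_apply A hf
  have hG := integral_hasDerivAt_right (hint.intervalIntegrable 0 t)
    (hint.stronglyMeasurableAtFilter _ _) hint.continuousAt
  rw [funext (duhamel_eq_exp_smul_apply_integral A hf)]
  convert (hasDerivAt_exp_smul A t).complex_clm_apply hG using 1
  rw [← mul_apply_eq_comp (exp (t • A)), exp_smul_mul_exp_neg_smul, one_apply_eq_self]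
  rfl

theorem integral_wave_kernel_eq_duhamel (B Binv : X →L[ℂ] X) (hf : Continuous f) (t : ℝ) :
    ∫ s in (0 : ℝ)..t, (I / 2) •
      Binv ((exp ((-(I * ((t - s : ℝ) : ℂ))) • B) - exp ((I * ((t - s : ℝ) : ℂ)) • B)) (f s)) =
    (I / 2) • Binv (duhamel ((-I) • B) f t - duhamel (I • B) f t) := by
  have hint (A : X →L[ℂ] X) :
      IntervalIntegrable (fun s => exp ((t - s) • A) (f s)) MeasureTheory.volume 0 t :=
    (((continuous_exp_smul A).comp (continuous_sub_left t)).clm_apply hf).intervalIntegrable _ _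
  have hsmul (c : ℂ) (r : ℝ) : (c * r) • B = r • (c • B) := by
    rw [mul_comm, ← smul_smul, Complex.coe_smul]
  rw [duhamel, duhamel, ← integral_sub (hint _) (hint _),
    ← Binv.intervalIntegral_comp_comm ((hint _).sub (hint _)), ← integral_smul]
  refine integral_congr fun s _ => ?_
  rw [← neg_mul, hsmul, hsmul, sub_apply]

end Duhamel

section Factorization

variable {X : Type*} [NormedAddCommGroup X] [NormedSpace ℂ X]
  {B Binv : X →L[ℂ] X} {f wm wp : ℝ → X} {t : ℝ}
  (hwm : HasDerivAt wm (((-I) • B) (wm t) + f t) t) (hwp : HasDerivAt wp ((I • B) (wp t) + f t) t)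
include hwm hwp

theorem hasDerivAt_I_half_smul_sub (hB₂ : ∀ x, Binv (B x) = x) :
    HasDerivAt (fun t => (I / 2) • Binv (wm t - wp t)) ((2 : ℂ)⁻¹ • (wm t + wp t)) t := by
  convert ((Binv.restrictScalars ℝ).hasFDerivAt.comp_hasDerivAt t (hwm.sub hwp)).const_smul
    (I / 2) using 1
  · rfl
  · simp only [ContinuousLinearMap.coe_restrictScalars', add_sub_add_right_eq_sub, map_sub,
      map_smul, hB₂, smul_apply]
    match_scalars <;> linear_combination (1 / 2 : ℂ) * Complex.I_sq

theorem hasDerivAt_half_smul_add (hB₁ : ∀ x, B (Binv x) = x) :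
    HasDerivAt (fun t => (2 : ℂ)⁻¹ • (wm t + wp t))
      (f t - B (B ((I / 2) • Binv (wm t - wp t)))) t := by
  convert (hwm.add hwp).const_smul (2 : ℂ)⁻¹ using 1
  · rfl
  · simp only [smul_apply, map_sub, map_smul, hB₁]
    match_scalars <;> ring

end Factorization

/-- Causal Green's function representation for the inhomogeneous wave equation:
`u t = ∫_0^t (i/2)·B⁻¹((exp(−i(t−s)B) − exp(i(t−s)B))(f s)) ds` is twice differentiable
for `t ≥ 0` and satisfies `u'' + B(B u) = f` there, with `u 0 = 0` and `u' 0 = 0`. -/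
theorem stmt_7
    {X : Type*} [NormedAddCommGroup X] [NormedSpace ℂ X] [CompleteSpace X]
    (B Binv : X →L[ℂ] X)
    (hB₁ : ∀ x, B (Binv x) = x) (hB₂ : ∀ x, Binv (B x) = x)
    (f : ℝ → X) (hf : Continuous f)
    (u : ℝ → X)
    (hu : ∀ t : ℝ, u t = ∫ s in (0:ℝ)..t, (Complex.I / 2) •
      Binv ((NormedSpace.exp ((-(Complex.I * ((t - s : ℝ) : ℂ))) • B)
            - NormedSpace.exp ((Complex.I * ((t - s : ℝ) : ℂ)) • B)) (f s))) :
    ∃ u' u'' : ℝ → X,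
      (∀ t : ℝ, 0 ≤ t → HasDerivAt u (u' t) t) ∧
      (∀ t : ℝ, 0 ≤ t → HasDerivAt u' (u'' t) t) ∧
      (∀ t : ℝ, 0 ≤ t → u'' t + B (B (u t)) = f t) ∧
      u 0 = 0 ∧ u' 0 = 0 := by
  obtain rfl : u = fun t => (I / 2) • Binv (duhamel ((-I) • B) f t - duhamel (I • B) f t) :=
    funext fun t => (hu t).trans (integral_wave_kernel_eq_duhamel B Binv hf t)
  have hwm := hasDerivAt_duhamel ((-I) • B) hf
  have hwp := hasDerivAt_duhamel (I • B) hf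
  refine ⟨fun t => (2 : ℂ)⁻¹ • (duhamel ((-I) • B) f t + duhamel (I • B) f t), _,
    fun t _ => hasDerivAt_I_half_smul_sub (hwm t) (hwp t) hB₂,
    fun t _ => hasDerivAt_half_smul_add (hwm t) (hwp t) hB₁,
    fun t _ => sub_add_cancel _ _, ?_, ?_⟩
  · simp only [duhamel_zero, sub_zero, map_zero, smul_zero]
  · simp only [duhamel_zero, add_zero, smul_zero]
end

section
/- Fix n ≥ 1 and an integer k ≥ 1. Let ν ∈ ℝⁿ be a unit vector and Θ : ℝⁿ → ℝⁿ an orthogonal linear map with Θν = e₁. Set L_k = 2^k, l_k = 2^{k/2}, c_k = 2^k, ρ_k = L_k · l_k^{n−1} = 2^{k(n+1)/2}, and let B_{ν,k} = Θ⁻¹([c_k − L_k/2, c_k + L_k/2] × [−l_k/2, l_k/2]^{n−1}). Suppose χ̂ : ℝⁿ → ℂ is smooth, supported in B_{ν,k}, and for every j ∈ ℕ and every multi-index α there is a constant C_{j,α} (independent of k and ν) such that |⟨ν, ∇_ξ⟩^j ∂_ξ^α χ̂(ξ)| ≤ C_{j,α} · 2^{−k(j + |α|/2)} for all ξ. Define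 φ(x) = (2π)^{−n} ρ_k^{−1/2} ∫_{ℝⁿ} χ̂(ξ) exp(i⟨x, ξ⟩) dξ. Then for every N ∈ ℕ there exists a constant C_N, depending only on n, N and the constants C_{j,α}, such that for all x ≠ 0: |φ(x)| ≤ C_N · 2^{k(n+1)/4} · (2^k |⟨ν, x⟩| + 2^{k/2} ‖x‖)^{−N}. -/
open MeasureTheory

/-- The list of direction vectors consisting of `j` copies of `ν` followed by, for each
coordinate `i`, `α i` copies of the `i`-th standard basis vector; it encodes the mixed
derivative `⟨ν,∂_ξ⟩^j ∂_ξ^α`. -/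
noncomputable def packetVecs {n : ℕ} (ν : EuclideanSpace ℝ (Fin n)) (j : ℕ)
    (α : Fin n → ℕ) : List (EuclideanSpace ℝ (Fin n)) :=
  List.replicate j ν ++
    (List.finRange n).flatMap fun i => List.replicate (α i) (EuclideanSpace.single i 1)

open Complex Function Set
open scoped ContDiff

/-!
Integrating by parts against the plane wave `ξ ↦ exp (i⟨x, ξ⟩)` turns a derivative of `χ̂` in a
direction `v` into the factor `-i⟨x, v⟩`. Hence `|⟨x, ν⟩|^j ∏ |x_i|^{α_i} |∫ χ̂ exp (i⟨x, ·⟩)|` is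
at most the bound on `⟨ν, ∇⟩^j ∂^α χ̂` times the volume `ρ_k` of the box carrying `χ̂`. The pure
cases `(j, α) = (N, 0)` and `(0, N e_i)`, rescaled by `2^k` and `2^{k/2}`, control
`(2^k |⟨ν, x⟩| + 2^{k/2} ‖x‖)^N |∫ χ̂ exp (i⟨x, ·⟩)|` by a multiple of `ρ_k`, and the prefactor
`ρ_k^{-1/2}` leaves `ρ_k^{1/2} = 2^{k(n+1)/4}`.
-/

noncomputable def planeWave {E : Type*} [NormedAddCommGroup E] [InnerProductSpace ℝ E]
    (x ξ : E) : ℂ :=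
  exp (I * (inner ℝ x ξ : ℂ))

theorem iteratedFDeriv_succ_apply_cons {𝕜 E F : Type*} [NontriviallyNormedField 𝕜]
    [NormedAddCommGroup E] [NormedSpace 𝕜 E] [NormedAddCommGroup F] [NormedSpace 𝕜 F]
    {f : E → F} {m : ℕ} (hf : ContDiff 𝕜 (m + 1) f) (ξ v : E) (w : Fin m → E) :
    iteratedFDeriv 𝕜 (m + 1) f ξ (Fin.cons v w) =
      fderiv 𝕜 (fun y => iteratedFDeriv 𝕜 m f y w) ξ v := by
  rw [iteratedFDeriv_succ_apply_left, fderiv_continuousMultilinear_apply_const_apply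
    ((hf.differentiable_iteratedFDeriv (by exact_mod_cast Nat.lt_succ_self m)).differentiableAt)]
  simp

theorem List.get_cons_eq_finCons {α : Type*} (v : α) (l : List α) :
    (v :: l).get = Fin.cons v l.get := by
  funext i
  cases i using Fin.cases <;> rfl

section PlaneWave

variable {E : Type*} [NormedAddCommGroup E] [InnerProductSpace ℝ E]

theorem norm_planeWave (x ξ : E) : ‖planeWave x ξ‖ = 1 := by
  simp [planeWave, norm_exp]

theorem continuous_planeWave (x : E) : Continuous (planeWave x) := by
  unfold planeWave
  fun_prop

theorem hasFDerivAt_planeWave (x ξ : E) :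
    HasFDerivAt (planeWave x) ((planeWave x ξ * I) • ofRealCLM.comp (innerSL ℝ x)) ξ := by
  have h := ((ofRealCLM.hasFDerivAt.comp ξ (innerSL ℝ x).hasFDerivAt).const_mul I).cexp
  rwa [smul_smul] at h

theorem fderiv_planeWave_apply (x ξ v : E) :
    fderiv ℝ (planeWave x) ξ v = I * inner ℝ x v * planeWave x ξ := by
  rw [(hasFDerivAt_planeWave x ξ).fderiv]
  simp only [FunLike.coe_smul, Pi.smul_apply, ContinuousLinearMap.comp_apply,
    innerSL_apply_apply, ofRealCLM_apply, smul_eq_mul]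
  ring

variable [FiniteDimensional ℝ E] [MeasurableSpace E] [BorelSpace E]
  {μ : Measure E} [μ.IsAddHaarMeasure]

theorem integral_fderiv_mul_planeWave {g : E → ℂ} (hg : ContDiff ℝ 1 g)
    (hgc : HasCompactSupport g) (x v : E) :
    ∫ ξ, fderiv ℝ g ξ v * planeWave x ξ ∂μ =
      -(I * inner ℝ x v) * ∫ ξ, g ξ * planeWave x ξ ∂μ := by
  have hgw : Integrable (fun ξ => g ξ * planeWave x ξ) μ :=
    (hg.continuous.mul (continuous_planeWave x)).integrable_of_hasCompactSupport hgc.mul_right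
  have hg'w : Integrable (fun ξ => fderiv ℝ g ξ v * planeWave x ξ) μ :=
    (((hg.continuous_fderiv one_ne_zero).clm_apply continuous_const).mul
      (continuous_planeWave x)).integrable_of_hasCompactSupport (hgc.fderiv_apply ℝ v).mul_right
  have hgw' : (fun ξ => g ξ * fderiv ℝ (planeWave x) ξ v) =
      fun ξ => I * inner ℝ x v * (g ξ * planeWave x ξ) := by
    funext ξ
    rw [fderiv_planeWave_apply]
    ring
  have h := integral_mul_fderiv_eq_neg_fderiv_mul_of_integrable (μ := μ) hg'w
    (hgw' ▸ hgw.const_mul _) hgw (fun ξ _ => hg.differentiable one_ne_zero ξ)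
    (fun ξ _ => (hasFDerivAt_planeWave x ξ).differentiableAt)
  rw [hgw', integral_const_mul] at h
  linear_combination h

theorem norm_integral_iteratedFDeriv_mul_planeWave {f : E → ℂ} (hf : ContDiff ℝ ∞ f)
    (hfc : HasCompactSupport f) (x : E) :
    ∀ l : List E, ‖∫ ξ, iteratedFDeriv ℝ l.length f ξ l.get * planeWave x ξ ∂μ‖ =
      (l.map fun v => |inner ℝ x v|).prod * ‖∫ ξ, f ξ * planeWave x ξ ∂μ‖
  | [] => by simp
  | v :: l => by
    have hD : ContDiff ℝ 1 fun y => iteratedFDeriv ℝ l.length f y l.get :=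
      (ContinuousMultilinearMap.apply ℝ _ ℂ l.get).contDiff.comp
        (hf.iteratedFDeriv_right (by exact_mod_cast le_top))
    have hDc : HasCompactSupport fun y => iteratedFDeriv ℝ l.length f y l.get :=
      (hfc.iteratedFDeriv l.length).comp_left
        (g := fun T : ContinuousMultilinearMap ℝ (fun _ : Fin l.length => E) ℂ => T l.get) rfl
    -- the head of the list is the outermost derivative: integrate it by parts, then recurse
    simp only [List.length_cons, List.get_cons_eq_finCons,
      iteratedFDeriv_succ_apply_cons (hf.of_le (by exact_mod_cast le_top)),
      integral_fderiv_mul_planeWave hD hDc, norm_mul, norm_neg,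
      norm_integral_iteratedFDeriv_mul_planeWave hf hfc x l, List.map_cons, List.prod_cons,
      norm_I, one_mul, norm_real, Real.norm_eq_abs, mul_assoc]

theorem prod_abs_inner_mul_norm_integral_le {f : E → ℂ} (hf : ContDiff ℝ ∞ f) {s : Set E}
    (hs : IsCompact s) (hfs : support f ⊆ s) (x : E) (l : List E) {M : ℝ}
    (hM : ∀ ξ, ‖iteratedFDeriv ℝ l.length f ξ l.get‖ ≤ M) :
    (l.map fun v => |inner ℝ x v|).prod * ‖∫ ξ, f ξ * planeWave x ξ ∂μ‖ ≤
      M * (μ s).toReal := by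
  have htsupp : tsupport f ⊆ s := closure_minimal hfs hs.isClosed
  have hfc : HasCompactSupport f := hs.of_isClosed_subset (isClosed_tsupport f) htsupp
  rw [← norm_integral_iteratedFDeriv_mul_planeWave hf hfc,
    ← setIntegral_eq_integral_of_forall_compl_eq_zero fun ξ hξ => ?_]
  · refine norm_setIntegral_le_of_norm_le_const hs.measure_lt_top fun ξ _ => ?_
    rw [norm_mul, norm_planeWave, mul_one]
    exact hM ξ
  · have : iteratedFDeriv ℝ l.length f ξ = 0 :=
      notMem_support.1 fun h => hξ (htsupp (support_iteratedFDeriv_subset _ h))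
    simp [this]

end PlaneWave

theorem pow_sum_le_card_pow_mul_sum_pow {ι : Type*} [Fintype ι] [Nonempty ι] {t : ι → ℝ}
    (ht : ∀ i, 0 ≤ t i) : ∀ N : ℕ, (∑ i, t i) ^ N ≤ (Fintype.card ι : ℝ) ^ N * ∑ i, t i ^ N
  | 0 => by simp [Nat.one_le_iff_ne_zero]
  | m + 1 => by
    calc (∑ i, t i) ^ (m + 1) ≤ (Fintype.card ι : ℝ) ^ m * ∑ i, t i ^ (m + 1) :=
          pow_sum_le_card_mul_sum_pow (fun i _ => ht i) m
      _ ≤ (Fintype.card ι : ℝ) ^ (m + 1) * ∑ i, t i ^ (m + 1) := by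
          have hcard : (1 : ℝ) ≤ Fintype.card ι := by exact_mod_cast Fintype.card_pos
          gcongr
          · exact Finset.sum_nonneg fun i _ => pow_nonneg (ht i) _
          · omega

theorem EuclideanSpace.norm_le_sum_abs {ι : Type*} [Fintype ι] (x : EuclideanSpace ℝ ι) :
    ‖x‖ ≤ ∑ i, |x i| := by
  rw [EuclideanSpace.norm_eq, Real.sqrt_le_left (Finset.sum_nonneg fun i _ => abs_nonneg _)]
  simpa only [Real.norm_eq_abs, sq_abs] using
    Finset.sum_sq_le_sq_sum_of_nonneg (s := Finset.univ) fun i _ => abs_nonneg (x i)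

theorem add_mul_norm_pow_mul_le {ι : Type*} [Fintype ι] (x : EuclideanSpace ℝ ι)
    {a c S K₀ : ℝ} {K : ι → ℝ} {N : ℕ} (ha : 0 ≤ a) (hc : 0 ≤ c) (hS : 0 ≤ S) (h₀ : a ^ N * S ≤ K₀)
    (hK : ∀ i, (c * |x i|) ^ N * S ≤ K i) :
    (a + c * ‖x‖) ^ N * S ≤ (Fintype.card ι + 1 : ℝ) ^ N * (K₀ + ∑ i, K i) := by
  let t : Option ι → ℝ := fun o => o.elim a fun i => c * |x i|
  have ht : ∀ o, 0 ≤ t o := by rintro (_ | i) <;> simp only [t, Option.elim] <;> positivity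
  calc (a + c * ‖x‖) ^ N * S ≤ (∑ o, t o) ^ N * S := by
        gcongr
        simpa [t, Fintype.sum_option, Finset.mul_sum] using
          mul_le_mul_of_nonneg_left (EuclideanSpace.norm_le_sum_abs x) hc
    _ ≤ (Fintype.card (Option ι) : ℝ) ^ N * (∑ o, t o ^ N) * S := by
        gcongr
        exact pow_sum_le_card_pow_mul_sum_pow ht N
    _ = (Fintype.card ι + 1 : ℝ) ^ N * (a ^ N * S + ∑ i, (c * |x i|) ^ N * S) := by
        simp [t, Fintype.sum_option, Finset.sum_mul, add_mul, mul_assoc]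
    _ ≤ (Fintype.card ι + 1 : ℝ) ^ N * (K₀ + ∑ i, K i) := by
        gcongr with i
        exact hK i

section ParabolicBox

variable {ι : Type*} [Fintype ι]

theorem EuclideanSpace.setOf_forall_mem_Icc_eq_preimage
    (Θ : EuclideanSpace ℝ ι ≃ₗᵢ[ℝ] EuclideanSpace ℝ ι) (a b : ι → ℝ) :
    {ξ | ∀ i, Θ ξ i ∈ Icc (a i) (b i)} =
      (Θ.toContinuousLinearEquiv.trans (EuclideanSpace.equiv ι ℝ)) ⁻¹' Icc a b := by
  ext ξ
  simp [Pi.le_def, forall_and]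

theorem EuclideanSpace.isCompact_setOf_forall_mem_Icc
    (Θ : EuclideanSpace ℝ ι ≃ₗᵢ[ℝ] EuclideanSpace ℝ ι) (a b : ι → ℝ) :
    IsCompact {ξ | ∀ i, Θ ξ i ∈ Icc (a i) (b i)} := by
  rw [EuclideanSpace.setOf_forall_mem_Icc_eq_preimage]
  exact (Θ.toContinuousLinearEquiv.trans
    (EuclideanSpace.equiv ι ℝ)).toHomeomorph.isCompact_preimage.2 isCompact_Icc

theorem EuclideanSpace.volume_setOf_forall_mem_Icc
    (Θ : EuclideanSpace ℝ ι ≃ₗᵢ[ℝ] EuclideanSpace ℝ ι) (a b : ι → ℝ) :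
    volume {ξ | ∀ i, Θ ξ i ∈ Icc (a i) (b i)} = ∏ i, ENNReal.ofReal (b i - a i) := by
  rw [EuclideanSpace.setOf_forall_mem_Icc_eq_preimage, ← Real.volume_Icc_pi]
  exact ((PiLp.volume_preserving_ofLp ι).comp Θ.measurePreserving).measure_preimage
    measurableSet_Icc.nullMeasurableSet

def parabolicBox (Θ : EuclideanSpace ℝ ι ≃ₗᵢ[ℝ] EuclideanSpace ℝ ι) (i₀ : ι) (c L l : ℝ) :
    Set (EuclideanSpace ℝ ι) :=
  {ξ | Θ ξ i₀ ∈ Icc (c - L / 2) (c + L / 2) ∧ ∀ i, i ≠ i₀ → Θ ξ i ∈ Icc (-(l / 2)) (l / 2)}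

theorem parabolicBox_eq_setOf_forall_mem_Icc [DecidableEq ι]
    (Θ : EuclideanSpace ℝ ι ≃ₗᵢ[ℝ] EuclideanSpace ℝ ι) (i₀ : ι) (c L l : ℝ) :
    parabolicBox Θ i₀ c L l = {ξ | ∀ i, Θ ξ i ∈
      Icc (if i = i₀ then c - L / 2 else -(l / 2)) (if i = i₀ then c + L / 2 else l / 2)} := by
  ext ξ
  refine ⟨fun ⟨h₀, h⟩ i => ?_,
    fun h => ⟨by simpa using h i₀, fun i hi => by simpa [hi] using h i⟩⟩
  by_cases hi : i = i₀
  · subst hi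
    simpa using h₀
  · simpa [hi] using h i hi

theorem isCompact_parabolicBox (Θ : EuclideanSpace ℝ ι ≃ₗᵢ[ℝ] EuclideanSpace ℝ ι) (i₀ : ι)
    (c L l : ℝ) : IsCompact (parabolicBox Θ i₀ c L l) := by
  classical
  rw [parabolicBox_eq_setOf_forall_mem_Icc]
  exact EuclideanSpace.isCompact_setOf_forall_mem_Icc Θ _ _

theorem volume_parabolicBox (Θ : EuclideanSpace ℝ ι ≃ₗᵢ[ℝ] EuclideanSpace ℝ ι) (i₀ : ι)
    (c L l : ℝ) : volume (parabolicBox Θ i₀ c L l) =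
      ENNReal.ofReal L * ENNReal.ofReal l ^ (Fintype.card ι - 1) := by
  classical
  rw [parabolicBox_eq_setOf_forall_mem_Icc, EuclideanSpace.volume_setOf_forall_mem_Icc,
    Fintype.prod_eq_mul_prod_compl i₀,
    Finset.prod_congr rfl (g := fun _ => ENNReal.ofReal l) fun i hi => ?_, Finset.prod_const,
    Finset.card_compl, Finset.card_singleton]
  · simp only [if_pos]
    ring_nf
  · simp only [if_neg (Finset.mem_compl.1 hi ∘ Finset.mem_singleton.2)]
    ring_nf

end ParabolicBox

theorem prod_map_packetVecs {n : ℕ} {M : Type*} [CommMonoid M]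
    (g : EuclideanSpace ℝ (Fin n) → M) (ν : EuclideanSpace ℝ (Fin n)) (j : ℕ) (α : Fin n → ℕ) :
    ((packetVecs ν j α).map g).prod = g ν ^ j * ∏ i, g (EuclideanSpace.single i 1) ^ α i := by
  rw [packetVecs, List.map_append, List.prod_append, List.map_replicate, List.prod_replicate,
    List.map_flatMap, List.flatMap_def, List.prod_flatten, List.map_map, ← List.ofFn_eq_map,
    List.prod_ofFn]
  simp [List.map_replicate]

theorem mul_pow_mul_le_of_le_mul_rpow_neg {a b c K : ℝ} {N : ℕ} (hc : 0 < c)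
    (h : a ^ N * b ≤ K * c ^ (-(N : ℝ))) : (c * a) ^ N * b ≤ K :=
  calc (c * a) ^ N * b = c ^ N * (a ^ N * b) := by ring
    _ ≤ c ^ N * (K * c ^ (-(N : ℝ))) := by gcongr
    _ = K := by
      rw [Real.rpow_neg hc.le, Real.rpow_natCast]
      field_simp

theorem add_mul_norm_pow_mul_norm_integral_le {n : ℕ} {f : EuclideanSpace ℝ (Fin n) → ℂ}
    (hf : ContDiff ℝ ∞ f) {s : Set (EuclideanSpace ℝ (Fin n))} (hs : IsCompact s)
    (hfs : support f ⊆ s) (ν x : EuclideanSpace ℝ (Fin n)) (N : ℕ) {c₁ c₂ K₀ : ℝ}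
    {K : Fin n → ℝ} (hc₁ : 0 < c₁) (hc₂ : 0 < c₂)
    (h₀ : ∀ ξ, ‖iteratedFDeriv ℝ (packetVecs ν N 0).length f ξ (packetVecs ν N 0).get‖ ≤
      K₀ * c₁ ^ (-(N : ℝ)))
    (hK : ∀ i ξ, ‖iteratedFDeriv ℝ (packetVecs ν 0 (Pi.single i N)).length f ξ
      (packetVecs ν 0 (Pi.single i N)).get‖ ≤ K i * c₂ ^ (-(N : ℝ))) :
    (c₁ * |inner ℝ ν x| + c₂ * ‖x‖) ^ N * ‖∫ ξ, f ξ * planeWave x ξ‖ ≤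
      (n + 1) ^ N * (K₀ + ∑ i, K i) * (volume s).toReal := by
  set S := ‖∫ ξ, f ξ * planeWave x ξ‖
  set V := (volume s).toReal
  have hν : |inner ℝ ν x| ^ N * S ≤ K₀ * V * c₁ ^ (-(N : ℝ)) := by
    simpa [prod_map_packetVecs, real_inner_comm, mul_right_comm] using
      prod_abs_inner_mul_norm_integral_le hf hs hfs x (packetVecs ν N 0) h₀
  have hcoord : ∀ i, |x i| ^ N * S ≤ K i * V * c₂ ^ (-(N : ℝ)) := fun i => by
    simpa [prod_map_packetVecs, Pi.single_apply, EuclideanSpace.inner_single_right,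
      mul_right_comm] using
      prod_abs_inner_mul_norm_integral_le hf hs hfs x (packetVecs ν 0 (Pi.single i N)) (hK i)
  calc (c₁ * |inner ℝ ν x| + c₂ * ‖x‖) ^ N * S
      ≤ (Fintype.card (Fin n) + 1 : ℝ) ^ N * (K₀ * V + ∑ i, K i * V) :=
        add_mul_norm_pow_mul_le x (by positivity) hc₂.le (norm_nonneg _)
          (mul_pow_mul_le_of_le_mul_rpow_neg hc₁ hν)
          fun i => mul_pow_mul_le_of_le_mul_rpow_neg hc₂ (hcoord i)
    _ = (n + 1) ^ N * (K₀ + ∑ i, K i) * V := by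
      rw [Fintype.card_fin, ← Finset.sum_mul]
      ring

theorem toReal_volume_dyadic_parabolicBox {n : ℕ}
    (Θ : EuclideanSpace ℝ (Fin n) ≃ₗᵢ[ℝ] EuclideanSpace ℝ (Fin n)) (i₀ : Fin n) (k : ℕ) :
    (volume (parabolicBox Θ i₀ (2 ^ k) (2 ^ k) (2 ^ ((k : ℝ) / 2)))).toReal =
      2 ^ ((k : ℝ) * ((n : ℝ) + 1) / 2) := by
  have hn : 1 ≤ n := Nat.one_le_iff_ne_zero.2 (NeZero.of_pos i₀.pos).out
  rw [volume_parabolicBox, ENNReal.toReal_mul, ENNReal.toReal_pow,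
    ENNReal.toReal_ofReal (by positivity), ENNReal.toReal_ofReal (by positivity), Fintype.card_fin,
    ← Real.rpow_natCast (2 : ℝ) k,
    ← Real.rpow_natCast _ (n - 1), ← Real.rpow_mul zero_le_two, ← Real.rpow_add two_pos,
    Nat.cast_sub hn]
  push_cast
  ring_nf

theorem rpow_neg_half_mul_le {ρ D S K : ℝ} {N : ℕ} (hρ : 0 < ρ) (hD : 0 < D)
    (h : D ^ N * S ≤ K * ρ) : ρ ^ (-(1 / 2 : ℝ)) * S ≤ K * ρ ^ (1 / 2 : ℝ) * D ^ (-(N : ℝ)) := by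
  rw [Real.rpow_neg hD.le, Real.rpow_natCast, ← div_eq_mul_inv, le_div_iff₀ (by positivity)]
  calc ρ ^ (-(1 / 2 : ℝ)) * S * D ^ N = ρ ^ (-(1 / 2 : ℝ)) * (D ^ N * S) := by ring
    _ ≤ ρ ^ (-(1 / 2 : ℝ)) * (K * ρ) := by gcongr
    _ = K * ρ ^ (1 / 2 : ℝ) := by
      rw [mul_left_comm, ← Real.rpow_add_one hρ.ne']
      norm_num

/-- Spatial decay of wave packets in the dyadic parabolic decomposition: a smooth symbol
`χ̂` supported in the rotated parabolic box `B_{ν,k}` and satisfying the parabolic symbol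
estimates gives rise to a packet `φ = F⁻¹(ρ_k^{-1/2} χ̂)` obeying
`|φ(x)| ≤ C_N 2^{k(n+1)/4} (2^k |⟨ν,x⟩| + 2^{k/2}‖x‖)^{-N}`, with `C_N` depending only on
`n`, `N` and the symbol constants. -/
theorem stmt_13
    (n : ℕ) (hn : 0 < n) (C : ℕ → (Fin n → ℕ) → ℝ) (N : ℕ) :
    ∃ C_N : ℝ, ∀ k : ℕ, 1 ≤ k →
      ∀ ν : EuclideanSpace ℝ (Fin n), ‖ν‖ = 1 →
      ∀ Θ : EuclideanSpace ℝ (Fin n) ≃ₗᵢ[ℝ] EuclideanSpace ℝ (Fin n),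
        Θ ν = EuclideanSpace.single (⟨0, hn⟩ : Fin n) (1 : ℝ) →
      ∀ χh : EuclideanSpace ℝ (Fin n) → ℂ, ContDiff ℝ (⊤ : ℕ∞) χh →
        Function.support χh ⊆
          {ξ : EuclideanSpace ℝ (Fin n) |
            (Θ ξ) ⟨0, hn⟩ ∈ Set.Icc ((2:ℝ)^k - (2:ℝ)^k / 2) ((2:ℝ)^k + (2:ℝ)^k / 2) ∧
            ∀ i : Fin n, i ≠ ⟨0, hn⟩ →
              (Θ ξ) i ∈ Set.Icc (-((2:ℝ)^((k:ℝ)/2) / 2)) ((2:ℝ)^((k:ℝ)/2) / 2)} →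
        (∀ (j : ℕ) (α : Fin n → ℕ) (ξ : EuclideanSpace ℝ (Fin n)),
          ‖iteratedFDeriv ℝ (packetVecs ν j α).length χh ξ ((packetVecs ν j α).get)‖
            ≤ C j α * (2:ℝ) ^ (-(k:ℝ) * ((j:ℝ) + (∑ i, (α i : ℝ)) / 2))) →
      ∀ x : EuclideanSpace ℝ (Fin n), x ≠ 0 →
        ‖(((((2 * Real.pi)^n)⁻¹ *
              ((2:ℝ) ^ (((k:ℝ) * ((n:ℝ) + 1)) / 2)) ^ (-(1/2 : ℝ)) : ℝ) : ℂ) *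
            ∫ ξ : EuclideanSpace ℝ (Fin n),
              χh ξ * Complex.exp (Complex.I * ((inner ℝ x ξ : ℝ) : ℂ)))‖
        ≤ C_N * (2:ℝ) ^ ((k:ℝ) * ((n:ℝ) + 1) / 4) *
            ((2:ℝ) ^ (k:ℝ) * |(inner ℝ ν x : ℝ)| + (2:ℝ) ^ ((k:ℝ)/2) * ‖x‖) ^ (-(N:ℝ)) := by
  refine ⟨((2 * Real.pi) ^ n)⁻¹ * ((n + 1) ^ N * (C N 0 + ∑ i, C 0 (Pi.single i N))), ?_⟩
  intro k _ ν _ Θ _ χh hχ hsupp hC x hx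
  have hbox : support χh ⊆ parabolicBox Θ ⟨0, hn⟩ (2 ^ k) (2 ^ k) (2 ^ ((k : ℝ) / 2)) := hsupp
  have hdecay := add_mul_norm_pow_mul_norm_integral_le hχ (isCompact_parabolicBox _ _ _ _ _)
    hbox ν x N (c₁ := 2 ^ (k : ℝ)) (c₂ := 2 ^ ((k : ℝ) / 2)) (K₀ := C N 0)
    (K := fun i => C 0 (Pi.single i N)) (by positivity) (by positivity)
    (fun ξ => (hC N 0 ξ).trans_eq ?_) (fun i ξ => (hC 0 (Pi.single i N) ξ).trans_eq ?_)
  · rw [toReal_volume_dyadic_parabolicBox] at hdecay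
    have hD : 0 < (2:ℝ) ^ (k:ℝ) * |(inner ℝ ν x : ℝ)| + (2:ℝ) ^ ((k:ℝ)/2) * ‖x‖ := by
      have := norm_pos_iff.2 hx
      positivity
    have hρ : ((2:ℝ) ^ ((k:ℝ) * ((n:ℝ) + 1) / 2)) ^ (1 / 2 : ℝ) =
        (2:ℝ) ^ ((k:ℝ) * ((n:ℝ) + 1) / 4) := by
      rw [← Real.rpow_mul zero_le_two]
      ring_nf
    have hbound := rpow_neg_half_mul_le (by positivity) hD hdecay
    rw [hρ] at hbound
    rw [norm_mul, Complex.norm_real, Real.norm_of_nonneg (by positivity), mul_assoc, mul_assoc,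
      mul_assoc]
    exact mul_le_mul_of_nonneg_left (hbound.trans_eq (by ring)) (by positivity)
  · rw [← Real.rpow_mul zero_le_two]
    simp
  · rw [← Real.rpow_mul zero_le_two]
    congr 2
    simp [Pi.single_apply]
    ring
end
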